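/- Let Λ : ℂ^{d×d} → ℂ^{d×d} be a positive trace-preserving linear map with Λ(ω) ≥ (Tr[ω]/(Nd)) 𝟙 for all ω ≥ 0 and ‖Λ‖_{∞→∞} ≤ 1. Then for 1 ≤ p ≤ q ≤ ∞, the projective Hilbert distance between 𝟙 and S(𝟙) = Λ*(Λ(𝟙)^{p−1})^{1/(q−1)} satisfies d_H(𝟙, S(𝟙)) ≤ ((p−1)/(q−1)) log N ≤ log N. -/

import Mathlib

/-!
Everything reduces to spectral intervals in the C⋆-algebra of matrices. Positivity improvement
gives `Λ 𝟙 ≥ N⁻¹`, and `‖Λ‖_{∞→∞} ≤ 1` gives `Λ 𝟙 ≤ 1`, so the spectrum of `Λ 𝟙` lies in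
`[N⁻¹, 1]`. The power `p - 1` maps it into `[N^{-(p-1)}, 1]`; the adjoint `Λ*` is positive and,
by trace preservation, unital, so it preserves this interval; the power `1/(q-1)` then maps it
into `[λ, 1]` with `λ = N^{-(p-1)/(q-1)}`. Finally, for `S` with spectrum in `[λ, 1]`,
`d_H(𝟙, S) = log ‖S‖ + log ‖S⁻¹‖ ≤ 0 + log λ⁻¹`.
-/

open scoped BigOperators ENNReal Kronecker ComplexOrder
open Matrix

noncomputable section

/-- The Schatten `p`-norm of a (possibly rectangular) complex matrix, defined via the
eigenvalues of `Xᴴ * X` (squares of the singular values); `p = ∞` gives the operator norm. -/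
noncomputable def sNorm {a b : Type*} [Fintype a] [Fintype b] [DecidableEq b]
    (p : ℝ≥0∞) (X : Matrix a b ℂ) : ℝ :=
  if p = ∞ then ⨆ i, Real.sqrt (((Matrix.posSemidef_conjTranspose_mul_self X).1).eigenvalues i)
  else (∑ i, (((Matrix.posSemidef_conjTranspose_mul_self X).1).eigenvalues i) ^ (p.toReal / 2)) ^
    (1 / p.toReal)

/-- Real power of a matrix via the functional calculus on Hermitian matrices
(junk value `0` on non-Hermitian input). -/
noncomputable def mpow {d : ℕ} (A : Matrix (Fin d) (Fin d) ℂ) (r : ℝ) :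
    Matrix (Fin d) (Fin d) ℂ :=
  if hA : A.IsHermitian then
    (hA.eigenvectorUnitary : Matrix (Fin d) (Fin d) ℂ) *
      Matrix.diagonal (fun i => ((hA.eigenvalues i ^ r : ℝ) : ℂ)) *
      star (hA.eigenvectorUnitary : Matrix (Fin d) (Fin d) ℂ)
  else 0

/-- The vector `ℓ_p` norm on `ℂ^n`, `p = ∞` giving the max norm. -/
noncomputable def lpNorm {n : ℕ} (p : ℝ≥0∞) (v : Fin n → ℂ) : ℝ :=
  if p = ∞ then ⨆ i, ‖v i‖
  else (∑ i, ‖v i‖ ^ p.toReal) ^ (1 / p.toReal)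

/-- Mixed `ℓ_q → ℓ_p` norm of a matrix. -/
noncomputable def matMixedNorm {m n : ℕ} (q p : ℝ≥0∞) (A : Matrix (Fin m) (Fin n) ℂ) : ℝ :=
  ⨆ v : Fin n → ℂ, lpNorm p (A.mulVec v) / lpNorm q v

/-- Mixed Schatten `q → p` norm of a linear map between matrix spaces. -/
noncomputable def mapMixedNorm {n m : ℕ} (q p : ℝ≥0∞)
    (Φ : Matrix (Fin n) (Fin n) ℂ →ₗ[ℂ] Matrix (Fin m) (Fin m) ℂ) : ℝ :=
  ⨆ X : Matrix (Fin n) (Fin n) ℂ, sNorm p (Φ X) / sNorm q X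

/-- Mixed Schatten `q → p` norm restricted to positive semidefinite inputs. -/
noncomputable def mapMixedNormPos {n m : ℕ} (q p : ℝ≥0∞)
    (Φ : Matrix (Fin n) (Fin n) ℂ →ₗ[ℂ] Matrix (Fin m) (Fin m) ℂ) : ℝ :=
  ⨆ X : {X : Matrix (Fin n) (Fin n) ℂ // X.PosSemidef}, sNorm p (Φ X.1) / sNorm q X.1

/-- The projective Hilbert metric between (positive definite) matrices. -/
noncomputable def dH {d : ℕ} (A B : Matrix (Fin d) (Fin d) ℂ) : ℝ :=
  Real.log (sNorm ∞ (mpow A (-(1/2)) * B * mpow A (-(1/2)))) +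
    Real.log (sNorm ∞ (mpow B (-(1/2)) * A * mpow B (-(1/2))))

/-- The Hilbert–Schmidt adjoint of a linear map between matrix spaces. -/
noncomputable def hsAdj {n m : ℕ}
    (Λ : Matrix (Fin n) (Fin n) ℂ →ₗ[ℂ] Matrix (Fin m) (Fin m) ℂ) :
    Matrix (Fin m) (Fin m) ℂ →ₗ[ℂ] Matrix (Fin n) (Fin n) ℂ where
  toFun H := Matrix.of fun i j => ((Λ (Matrix.single i j 1))ᴴ * H).trace
  map_add' x y := by
    ext i j
    simp [Matrix.mul_add, Matrix.trace_add]
  map_smul' c x := by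
    ext i j
    simp [Matrix.mul_smul, Matrix.trace_smul]

/-- Application of `id_k ⊗ Φ` to a matrix on `ℂ^k ⊗ ℂ^n`, acting blockwise. -/
def blockMap {n m : ℕ} (Φ : Matrix (Fin n) (Fin n) ℂ →ₗ[ℂ] Matrix (Fin m) (Fin m) ℂ) (k : ℕ)
    (M : Matrix (Fin k × Fin n) (Fin k × Fin n) ℂ) : Matrix (Fin k × Fin m) (Fin k × Fin m) ℂ :=
  Matrix.of fun x y => Φ (Matrix.of fun i j => M (x.1, i) (y.1, j)) x.2 y.2

/-- Complete positivity of a linear map between matrix spaces. -/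
def IsCP {n m : ℕ} (Φ : Matrix (Fin n) (Fin n) ℂ →ₗ[ℂ] Matrix (Fin m) (Fin m) ℂ) : Prop :=
  ∀ (k : ℕ) (M : Matrix (Fin k × Fin n) (Fin k × Fin n) ℂ),
    M.PosSemidef → (blockMap Φ k M).PosSemidef

/-- Partial trace over the second tensor factor. -/
def traceRight {a b : ℕ} (ρ : Matrix (Fin a × Fin b) (Fin a × Fin b) ℂ) :
    Matrix (Fin a) (Fin a) ℂ :=
  Matrix.of fun i j => ∑ k, ρ (i, k) (j, k)

/-- Partial trace over the first tensor factor. -/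
def traceLeft {a b : ℕ} (ρ : Matrix (Fin a × Fin b) (Fin a × Fin b) ℂ) :
    Matrix (Fin b) (Fin b) ℂ :=
  Matrix.of fun i j => ∑ k, ρ (k, i) (k, j)

/-- One step of the (quantum) Boyd iteration: `S(ω) = (Λ*( (Λ ω)^(p-1) ))^e`
where `e` plays the role of `1/(q-1)`. -/
noncomputable def boydS {d : ℕ} (Λ : Matrix (Fin d) (Fin d) ℂ →ₗ[ℂ] Matrix (Fin d) (Fin d) ℂ)
    (p e : ℝ) (ω : Matrix (Fin d) (Fin d) ℂ) : Matrix (Fin d) (Fin d) ℂ :=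
  mpow (hsAdj Λ (mpow (Λ ω) (p - 1))) e

open Set
open scoped MatrixOrder Matrix.Norms.L2Operator

section SpectralIntervals

theorem spectrum_cfc_rpow_subset_Icc {A : Type*} [Ring A] [StarRing A] [TopologicalSpace A]
    [Algebra ℝ A] [ContinuousFunctionalCalculus ℝ A IsSelfAdjoint] {a : A} (ha : IsSelfAdjoint a)
    {lo r : ℝ} (hlo : 0 ≤ lo) (hr : 0 ≤ r) (h : spectrum ℝ a ⊆ Icc lo 1) :
    spectrum ℝ (cfc (fun x : ℝ => x ^ r) a) ⊆ Icc (lo ^ r) 1 := by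
  rw [cfc_map_spectrum _ a]
  rintro _ ⟨x, hx, rfl⟩
  obtain ⟨hlox, hx1⟩ := h hx
  exact ⟨Real.rpow_le_rpow hlo hlox hr, Real.rpow_le_one (hlo.trans hlox) hx1 hr⟩

variable {A B : Type*} [CStarAlgebra A] [PartialOrder A] [StarOrderedRing A]
  [CStarAlgebra B] [PartialOrder B] [StarOrderedRing B]

theorem spectrum_subset_Icc_iff {a : A} (ha : IsSelfAdjoint a) {lo hi : ℝ} :
    spectrum ℝ a ⊆ Icc lo hi ↔ algebraMap ℝ A lo ≤ a ∧ a ≤ algebraMap ℝ A hi := by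
  rw [algebraMap_le_iff_le_spectrum ha, le_algebraMap_iff_spectrum_le ha]
  exact ⟨fun h => ⟨fun x hx => (h hx).1, fun x hx => (h hx).2⟩,
    fun h x hx => ⟨h.1 x hx, h.2 x hx⟩⟩

theorem PositiveLinearMap.spectrum_apply_subset_Icc (Φ : A →ₚ[ℂ] B) (hΦ : Φ 1 = 1) {a : A}
    (ha : IsSelfAdjoint a) {lo hi : ℝ} (h : spectrum ℝ a ⊆ Icc lo hi) :
    spectrum ℝ (Φ a) ⊆ Icc lo hi := by
  have hΦ_algebraMap (r : ℝ) : Φ (algebraMap ℝ A r) = algebraMap ℝ B r := by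
    rw [Algebra.algebraMap_eq_smul_one, Algebra.algebraMap_eq_smul_one, map_smul_of_tower, hΦ]
  obtain ⟨hlo, hhi⟩ := (spectrum_subset_Icc_iff ha).mp h
  rw [spectrum_subset_Icc_iff (ha.map' Φ), ← hΦ_algebraMap, ← hΦ_algebraMap]
  exact ⟨OrderHomClass.mono Φ hlo, OrderHomClass.mono Φ hhi⟩

end SpectralIntervals

section Matrices

variable {n m : ℕ}

-- Off the Hermitian matrices both sides are `0`.
theorem mpow_eq_cfc (A : Matrix (Fin n) (Fin n) ℂ) (r : ℝ) :
    mpow A r = cfc (fun x : ℝ => x ^ r) A := by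
  unfold mpow
  split_ifs with hA
  · rw [hA.cfc_eq, Matrix.IsHermitian.cfc, Unitary.conjStarAlgAut_apply]
    rfl
  · exact (cfc_apply_of_not_predicate A hA).symm

theorem isHermitian_mpow (A : Matrix (Fin n) (Fin n) ℂ) (r : ℝ) : (mpow A r).IsHermitian :=
  mpow_eq_cfc A r ▸ cfc_predicate _ A

theorem spectrum_mpow_subset_Icc {A : Matrix (Fin n) (Fin n) ℂ} (hA : A.IsHermitian)
    {lo r : ℝ} (hlo : 0 ≤ lo) (hr : 0 ≤ r) (h : spectrum ℝ A ⊆ Icc lo 1) :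
    spectrum ℝ (mpow A r) ⊆ Icc (lo ^ r) 1 :=
  mpow_eq_cfc A r ▸ spectrum_cfc_rpow_subset_Icc hA.isSelfAdjoint hlo hr h

theorem sNorm_top_eq_l2_opNorm {a b : Type*} [Fintype a] [Fintype b] [DecidableEq b]
    (X : Matrix a b ℂ) : sNorm ∞ X = ‖X‖ := by
  have hXX := Matrix.posSemidef_conjTranspose_mul_self X
  have hnorm : ‖Xᴴ * X‖ = ‖X‖ ^ 2 := by rw [Matrix.l2_opNorm_conjTranspose_mul_self, sq]
  have hle_iff (c : ℝ) : Xᴴ * X ≤ algebraMap ℝ _ c ↔ ∀ i, hXX.1.eigenvalues i ≤ c := by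
    rw [le_algebraMap_iff_spectrum_le hXX.1.isSelfAdjoint,
      hXX.1.spectrum_real_eq_range_eigenvalues, forall_mem_range]
  rw [sNorm, if_pos rfl]
  apply le_antisymm
  · refine Real.iSup_le (fun i => Real.sqrt_le_iff.mpr ⟨norm_nonneg X, ?_⟩) (norm_nonneg X)
    rw [← hnorm]
    exact (hle_iff _).mp (IsSelfAdjoint.le_algebraMap_norm_self hXX.1.isSelfAdjoint) i
  · set s := ⨆ i, Real.sqrt (hXX.1.eigenvalues i)
    have hs : 0 ≤ s := Real.iSup_nonneg fun i => Real.sqrt_nonneg _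
    have hle : ‖Xᴴ * X‖ ≤ s ^ 2 := by
      rw [CStarAlgebra.norm_le_iff_le_algebraMap _ (sq_nonneg s) hXX.nonneg, hle_iff]
      exact fun i => (Real.sqrt_le_iff.mp (le_ciSup (f := fun i => Real.sqrt
        (hXX.1.eigenvalues i)) (finite_range _).bddAbove i)).2
    nlinarith [norm_nonneg X]

theorem sNorm_top_apply_le_mapMixedNorm_mul
    (Λ : Matrix (Fin n) (Fin n) ℂ →ₗ[ℂ] Matrix (Fin m) (Fin m) ℂ) (X : Matrix (Fin n) (Fin n) ℂ) :
    sNorm ∞ (Λ X) ≤ mapMixedNorm ∞ ∞ Λ * sNorm ∞ X := by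
  rcases eq_or_ne X 0 with rfl | hX
  · simp [sNorm_top_eq_l2_opNorm]
  have hbdd : BddAbove (range fun Y => sNorm ∞ (Λ Y) / sNorm ∞ Y) := by
    refine ⟨‖LinearMap.toContinuousLinearMap Λ‖, ?_⟩
    rintro _ ⟨Y, rfl⟩
    show sNorm ∞ (Λ Y) / sNorm ∞ Y ≤ _
    rw [sNorm_top_eq_l2_opNorm, sNorm_top_eq_l2_opNorm]
    exact div_le_of_le_mul₀ (norm_nonneg _) (norm_nonneg _)
      ((LinearMap.toContinuousLinearMap Λ).le_opNorm Y)
  have hX' : 0 < sNorm ∞ X := by rw [sNorm_top_eq_l2_opNorm]; exact norm_pos_iff.mpr hX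
  exact (div_le_iff₀ hX').mp (le_ciSup hbdd X)

theorem trace_mul_nonneg_of_nonneg {ι : Type*} [Fintype ι] [DecidableEq ι]
    {A B : Matrix ι ι ℂ} (hA : 0 ≤ A) (hB : 0 ≤ B) : 0 ≤ (A * B).trace := by
  obtain ⟨C, rfl⟩ := CStarAlgebra.nonneg_iff_eq_star_mul_self.mp hA
  rw [Matrix.mul_assoc, Matrix.trace_mul_comm, Matrix.mul_assoc, ← Matrix.mul_assoc]
  exact (Matrix.nonneg_iff_posSemidef.mp (star_right_conjugate_nonneg hB C)).trace_nonneg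

theorem dotProduct_mulVec_eq_trace_mul_vecMulVec {ι R : Type*} [Fintype ι] [CommSemiring R]
    [StarRing R] (M : Matrix ι ι R) (x : ι → R) :
    star x ⬝ᵥ (M *ᵥ x) = (M * Matrix.vecMulVec x (star x)).trace := by
  simp only [dotProduct, Matrix.mulVec, Matrix.trace, Matrix.diag_apply, Matrix.mul_apply,
    Matrix.vecMulVec_apply, Finset.mul_sum, Pi.star_apply]
  exact Finset.sum_congr rfl fun i _ => Finset.sum_congr rfl fun j _ => by ring

theorem map_conjTranspose_of_posSemidef {ι κ : Type*} [Fintype ι] [DecidableEq ι] [Fintype κ]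
    [DecidableEq κ] {Λ : Matrix ι ι ℂ →ₗ[ℂ] Matrix κ κ ℂ}
    (hΛ : ∀ X, X.PosSemidef → (Λ X).PosSemidef) (X : Matrix ι ι ℂ) :
    Λ Xᴴ = (Λ X)ᴴ :=
  map_star (PositiveLinearMap.mk₀ Λ fun X hX =>
    (hΛ X (Matrix.nonneg_iff_posSemidef.mp hX)).nonneg) X

theorem trace_conjTranspose_hsAdj_mul
    (Λ : Matrix (Fin n) (Fin n) ℂ →ₗ[ℂ] Matrix (Fin m) (Fin m) ℂ)
    (H : Matrix (Fin m) (Fin m) ℂ) (X : Matrix (Fin n) (Fin n) ℂ) :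
    ((hsAdj Λ H)ᴴ * X).trace = (Hᴴ * Λ X).trace := by
  conv_rhs => rw [Matrix.matrix_eq_sum_single X]
  simp only [map_sum, Matrix.mul_sum, Matrix.trace_sum]
  rw [Matrix.trace, Finset.sum_comm]
  refine Finset.sum_congr rfl fun i _ => ?_
  simp only [Matrix.diag_apply, Matrix.mul_apply]
  refine Finset.sum_congr rfl fun j _ => ?_
  rw [show Matrix.single j i (X j i) = X j i • Matrix.single j i 1 by
      rw [Matrix.smul_single, smul_eq_mul, mul_one], map_smul, Matrix.mul_smul,
    Matrix.trace_smul, smul_eq_mul, mul_comm, Matrix.conjTranspose_apply, hsAdj,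
    LinearMap.coe_mk, AddHom.coe_mk, Matrix.of_apply, ← Matrix.trace_conjTranspose,
    Matrix.conjTranspose_mul, Matrix.conjTranspose_conjTranspose]

theorem isHermitian_hsAdj {Λ : Matrix (Fin n) (Fin n) ℂ →ₗ[ℂ] Matrix (Fin m) (Fin m) ℂ}
    (hΛ : ∀ X, X.PosSemidef → (Λ X).PosSemidef) {H : Matrix (Fin m) (Fin m) ℂ}
    (hH : H.IsHermitian) : (hsAdj Λ H).IsHermitian := by
  ext i j
  rw [Matrix.conjTranspose_apply, hsAdj, LinearMap.coe_mk, AddHom.coe_mk, Matrix.of_apply,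
    Matrix.of_apply, ← Matrix.trace_conjTranspose, Matrix.conjTranspose_mul,
    Matrix.conjTranspose_conjTranspose, hH.eq, Matrix.trace_mul_comm,
    ← map_conjTranspose_of_posSemidef hΛ, Matrix.conjTranspose_single, star_one]

theorem hsAdj_posSemidef {Λ : Matrix (Fin n) (Fin n) ℂ →ₗ[ℂ] Matrix (Fin m) (Fin m) ℂ}
    (hΛ : ∀ X, X.PosSemidef → (Λ X).PosSemidef) {H : Matrix (Fin m) (Fin m) ℂ}
    (hH : H.PosSemidef) : (hsAdj Λ H).PosSemidef := by
  have hherm := isHermitian_hsAdj hΛ hH.1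
  refine Matrix.posSemidef_iff_dotProduct_mulVec.mpr ⟨hherm, fun x => ?_⟩
  rw [dotProduct_mulVec_eq_trace_mul_vecMulVec, ← hherm.eq, trace_conjTranspose_hsAdj_mul,
    hH.1.eq]
  exact trace_mul_nonneg_of_nonneg hH.nonneg (hΛ _ (Matrix.posSemidef_vecMulVec_self_star x)).nonneg

theorem hsAdj_one {Λ : Matrix (Fin n) (Fin n) ℂ →ₗ[ℂ] Matrix (Fin m) (Fin m) ℂ}
    (hTP : ∀ X, (Λ X).trace = X.trace) : hsAdj Λ 1 = 1 := by
  ext i j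
  rw [hsAdj, LinearMap.coe_mk, AddHom.coe_mk, Matrix.of_apply, Matrix.mul_one,
    Matrix.trace_conjTranspose, hTP, Matrix.one_apply]
  split_ifs with hij
  · rw [hij, Matrix.trace_single_eq_same, star_one]
  · rw [Matrix.trace_single_eq_of_ne i j 1 hij, star_zero]

theorem spectrum_hsAdj_subset_Icc {Λ : Matrix (Fin n) (Fin n) ℂ →ₗ[ℂ] Matrix (Fin m) (Fin m) ℂ}
    (hΛ : ∀ X, X.PosSemidef → (Λ X).PosSemidef) (hTP : ∀ X, (Λ X).trace = X.trace)
    {H : Matrix (Fin m) (Fin m) ℂ} (hH : H.IsHermitian) {lo hi : ℝ}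
    (h : spectrum ℝ H ⊆ Icc lo hi) : spectrum ℝ (hsAdj Λ H) ⊆ Icc lo hi :=
  (PositiveLinearMap.mk₀ (hsAdj Λ) fun _ hH =>
    (hsAdj_posSemidef hΛ (Matrix.nonneg_iff_posSemidef.mp hH)).nonneg)
    |>.spectrum_apply_subset_Icc (hsAdj_one hTP) hH.isSelfAdjoint h

theorem dH_one_le_of_spectrum_subset_Icc {S : Matrix (Fin n) (Fin n) ℂ} (hS : S.IsHermitian)
    {lo : ℝ} (hlo : 0 < lo) (hlo1 : lo ≤ 1) (h : spectrum ℝ S ⊆ Icc lo 1) :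
    dH 1 S ≤ -Real.log lo := by
  have hmpow_one : mpow (1 : Matrix (Fin n) (Fin n) ℂ) (-(1 / 2)) = 1 := by
    have := cfc_algebraMap (A := Matrix (Fin n) (Fin n) ℂ) (1 : ℝ) fun x : ℝ => x ^ (-(1 / 2) : ℝ)
    rwa [map_one, Real.one_rpow, map_one, ← mpow_eq_cfc] at this
  have hinv : mpow S (-(1 / 2)) * mpow S (-(1 / 2)) = cfc (fun x : ℝ => x⁻¹) S := by
    rw [mpow_eq_cfc, ← cfc_mul _ _ S (S.finite_real_spectrum.continuousOn _)
      (S.finite_real_spectrum.continuousOn _)]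
    refine cfc_congr fun x hx => ?_
    rw [← Real.rpow_add (hlo.trans_le (h hx).1), ← Real.rpow_neg_one]
    norm_num
  obtain ⟨hloS, hS1⟩ := (spectrum_subset_Icc_iff hS.isSelfAdjoint).mp h
  have hS0 : 0 ≤ S := (algebraMap_nonneg _ hlo.le).trans hloS
  have hnormS : ‖S‖ ≤ 1 := (CStarAlgebra.norm_le_iff_le_algebraMap S zero_le_one hS0).mpr hS1
  have hnormInv : ‖cfc (fun x : ℝ => x⁻¹) S‖ ≤ lo⁻¹ := by
    refine norm_cfc_le (inv_nonneg.mpr hlo.le) fun x hx => ?_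
    have hx' := h hx
    rw [Real.norm_of_nonneg (inv_nonneg.mpr (hlo.le.trans hx'.1))]
    exact inv_anti₀ hlo hx'.1
  have hlogInv : Real.log ‖cfc (fun x : ℝ => x⁻¹) S‖ ≤ -Real.log lo := by
    rw [← Real.log_inv]
    rcases (norm_nonneg (cfc (fun x : ℝ => x⁻¹) S)).eq_or_lt with h0 | h0
    · rw [← h0, Real.log_zero]
      exact Real.log_nonneg ((one_le_inv₀ hlo).mpr hlo1)
    · exact Real.log_le_log h0 hnormInv
  unfold dH
  rw [hmpow_one, Matrix.one_mul, Matrix.mul_one, Matrix.mul_one, hinv, sNorm_top_eq_l2_opNorm,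
    sNorm_top_eq_l2_opNorm]
  linarith [Real.log_nonpos (norm_nonneg S) hnormS]

theorem spectrum_apply_one_subset_Icc (hn : 0 < n) {N : ℝ} (hN : 0 < N)
    {Λ : Matrix (Fin n) (Fin n) ℂ →ₗ[ℂ] Matrix (Fin n) (Fin n) ℂ}
    (hpos : ∀ X : Matrix (Fin n) (Fin n) ℂ, X.PosSemidef → (Λ X).PosSemidef)
    (himp : ∀ ω : Matrix (Fin n) (Fin n) ℂ, ω.PosSemidef →
      (Λ ω - (ω.trace / (((N : ℝ) : ℂ) * (n : ℂ))) • 1).PosSemidef)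
    (hnorm : mapMixedNorm ∞ ∞ Λ ≤ 1) :
    spectrum ℝ (Λ 1) ⊆ Icc N⁻¹ 1 := by
  have : Nonempty (Fin n) := ⟨⟨0, hn⟩⟩
  have hΛ1 := hpos 1 Matrix.PosSemidef.one
  rw [spectrum_subset_Icc_iff hΛ1.1.isSelfAdjoint]
  constructor
  · have hscalar :
        (1 : Matrix (Fin n) (Fin n) ℂ).trace / ((N : ℂ) * (n : ℂ)) = (N⁻¹ : ℝ) := by
      rw [Matrix.trace_one, Fintype.card_fin]
      push_cast
      field_simp
    rw [Matrix.le_iff, Algebra.algebraMap_eq_smul_one, ← Complex.coe_smul, ← hscalar]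
    exact himp 1 Matrix.PosSemidef.one
  · rw [← CStarAlgebra.norm_le_iff_le_algebraMap _ zero_le_one hΛ1.nonneg,
      ← sNorm_top_eq_l2_opNorm]
    calc sNorm ∞ (Λ 1) ≤ mapMixedNorm ∞ ∞ Λ * sNorm ∞ (1 : Matrix (Fin n) (Fin n) ℂ) :=
          sNorm_top_apply_le_mapMixedNorm_mul Λ 1
      _ ≤ 1 := by rw [sNorm_top_eq_l2_opNorm, norm_one, mul_one]; exact hnorm

end Matrices

theorem sub_one_mul_toReal_one_div_sub_one_le_one {p : ℝ} {q : ℝ≥0∞} (hp : 1 ≤ p)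
    (hpq : ENNReal.ofReal p ≤ q) : (p - 1) * (1 / (q - 1)).toReal ≤ 1 := by
  have hq1 : 1 ≤ q := (ENNReal.one_le_ofReal.mpr hp).trans hpq
  rcases eq_or_ne q ⊤ with rfl | hq
  · simp
  have hpq' : p ≤ q.toReal := (ENNReal.ofReal_le_iff_le_toReal hq).mp hpq
  rw [ENNReal.toReal_div, ENNReal.toReal_one, ENNReal.toReal_sub_of_le hq1 hq,
    ENNReal.toReal_one, mul_one_div]
  exact div_le_one_of_le₀ (by linarith) (by linarith)

/-- bound on the initial Hilbert-metric distance `d_H(𝟙, S(𝟙))` of the Boyd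
iteration for a positivity improving, trace preserving positive map. -/
theorem boyd_initial_distance_bound
    {d : ℕ} (hd : 0 < d) (N : ℝ) (hN : 0 < N)
    (Λ : Matrix (Fin d) (Fin d) ℂ →ₗ[ℂ] Matrix (Fin d) (Fin d) ℂ)
    (hpos : ∀ X : Matrix (Fin d) (Fin d) ℂ, X.PosSemidef → (Λ X).PosSemidef)
    (himp : ∀ ω : Matrix (Fin d) (Fin d) ℂ, ω.PosSemidef →
      (Λ ω - (ω.trace / (((N : ℝ) : ℂ) * (d : ℂ))) • 1).PosSemidef)
    (hnorm : mapMixedNorm ∞ ∞ Λ ≤ 1)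
    (hTP : ∀ X, (Λ X).trace = X.trace)
    (p : ℝ) (q : ℝ≥0∞) (hp : 1 ≤ p) (hpq : ENNReal.ofReal p ≤ q) :
    dH 1 (boydS Λ p ((1/(q-1)).toReal) 1) ≤ (p - 1) * (1/(q-1)).toReal * Real.log N ∧
    (p - 1) * (1/(q-1)).toReal * Real.log N ≤ Real.log N := by
  set e := (1 / (q - 1)).toReal
  have he : 0 ≤ e := ENNReal.toReal_nonneg
  have : Nonempty (Fin d) := ⟨⟨0, hd⟩⟩
  have hΛ1_herm := (hpos 1 Matrix.PosSemidef.one).1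
  have hΛ1 := spectrum_apply_one_subset_Icc hd hN hpos himp hnorm
  have hN1 : 1 ≤ N := by
    obtain ⟨x, hx⟩ :=
      ContinuousFunctionalCalculus.spectrum_nonempty (R := ℝ) (Λ 1) hΛ1_herm.isSelfAdjoint
    exact (inv_le_one₀ hN).mp ((hΛ1 hx).1.trans (hΛ1 hx).2)
  have hB := spectrum_mpow_subset_Icc hΛ1_herm (inv_nonneg.mpr hN.le) (sub_nonneg.mpr hp) hΛ1
  have hT := spectrum_hsAdj_subset_Icc hpos hTP (isHermitian_mpow _ _) hB
  have hS := spectrum_mpow_subset_Icc (isHermitian_hsAdj hpos (isHermitian_mpow _ _))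
    (by positivity) he hT
  have hlo1 : (N⁻¹ ^ (p - 1)) ^ e ≤ 1 :=
    Real.rpow_le_one (by positivity)
      (Real.rpow_le_one (inv_nonneg.mpr hN.le) (inv_le_one_of_one_le₀ hN1) (sub_nonneg.mpr hp))
      he
  have hdist := dH_one_le_of_spectrum_subset_Icc (isHermitian_mpow _ _) (by positivity) hlo1 hS
  have hlog : -Real.log ((N⁻¹ ^ (p - 1)) ^ e) = (p - 1) * e * Real.log N := by
    rw [← Real.rpow_mul (inv_nonneg.mpr hN.le), Real.inv_rpow hN.le, Real.log_inv,
      Real.log_rpow hN]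
    ring
  exact ⟨hlog ▸ hdist, mul_le_of_le_one_left (Real.log_nonneg hN1)
    (sub_one_mul_toReal_one_div_sub_one_le_one hp hpq)⟩
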